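/- If a locally finite weighted graph satisfies CD(K,∞), then for any finitely supported f, the function u(t,x) = Γ(P_t f)(x) is a subsolution of the damped heat equation: (d/dt) Γ(P_t f) ≤ Δ Γ(P_t f) − 2K Γ(P_t f) pointwise for t > 0. -/

import Mathlib

open scoped BigOperators
open Filter

/-- The carré du champ operator. -/
noncomputable def gam {V : Type*} (m : V → ℝ) (μ : V → V → ℝ) (f g : V → ℝ) (x : V) : ℝ :=
  (1 / (2 * m x)) * ∑' y, μ x y * (f y - f x) * (g y - g x)

/-- The formal graph Laplacian. -/
noncomputable def lap {V : Type*} (m : V → ℝ) (μ : V → V → ℝ) (f : V → ℝ) (x : V) : ℝ :=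
  (1 / m x) * ∑' y, μ x y * (f y - f x)

/-- The Dirichlet energy `Q(f) = (1/2) ∑_{x,y} μ_{xy} (f y - f x)²`. -/
noncomputable def QN {V : Type*} (μ : V → V → ℝ) (f : V → ℝ) : ℝ :=
  (1 / 2) * ∑' p : V × V, μ p.1 p.2 * (f p.2 - f p.1) ^ 2

/-- The `ℓ²(V,m)` norm. -/
noncomputable def l2n {V : Type*} (m : V → ℝ) (f : V → ℝ) : ℝ :=
  Real.sqrt (∑' x, f x ^ 2 * m x)

/-- The iterated carré du champ `Γ₂(f) = (1/2) Δ Γ(f) - Γ(f, Δ f)`. -/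
noncomputable def gam2 {V : Type*} (m : V → ℝ) (μ : V → V → ℝ) (f : V → ℝ) (x : V) : ℝ :=
  (1 / 2) * lap m μ (fun y => gam m μ f f y) x - gam m μ f (lap m μ f) x

/-! Along the heat flow, `∂ₜ Γ(P_t f) = 2 Γ(P_t f, Δ P_t f)`, and by the definition of `Γ₂` this
equals `Δ Γ(P_t f) - 2 Γ₂(P_t f)`; the curvature condition `Γ₂ ≥ K Γ` then gives the bound. -/

theorem gam_eq_sum_toFinset {V : Type*} (m : V → ℝ) {μ : V → V → ℝ} {x : V}
    (hx : (Function.support (μ x)).Finite) (f g : V → ℝ) :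
    gam m μ f g x = (1 / (2 * m x)) * ∑ y ∈ hx.toFinset, μ x y * (f y - f x) * (g y - g x) := by
  unfold gam
  congr 1
  refine tsum_eq_sum fun y hy => ?_
  rw [Function.notMem_support.mp fun h => hy (hx.mem_toFinset.mpr h)]
  ring

theorem hasDerivAt_gam_self {V : Type*} {m : V → ℝ} {μ : V → V → ℝ} {x : V}
    (hx : (Function.support (μ x)).Finite) {u : ℝ → V → ℝ} {u' : V → ℝ} {t : ℝ}
    (hu : ∀ y, HasDerivAt (fun s => u s y) (u' y) t) :
    HasDerivAt (fun s => gam m μ (u s) (u s) x) (2 * gam m μ (u t) u' x) t := by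
  simp_rw [gam_eq_sum_toFinset m hx]
  have hsum := HasDerivAt.fun_sum (u := hx.toFinset) fun y _ =>
    (((hu y).fun_sub (hu x)).const_mul (μ x y)).fun_mul ((hu y).fun_sub (hu x))
  refine (hsum.const_mul (1 / (2 * m x))).congr_deriv ?_
  rw [Finset.mul_sum, Finset.mul_sum, Finset.mul_sum]
  refine Finset.sum_congr rfl fun y _ => ?_
  ring

theorem stmt11 {V : Type*} (m : V → ℝ) (μ : V → V → ℝ)
    (hlf : ∀ x, (Function.support (μ x)).Finite)
    -- the heat semigroup `P t = e^{tΔ}` and its standard properties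
    (P : ℝ → (V → ℝ) → V → ℝ)
    (hheat : ∀ (f : V → ℝ) (x : V) (t : ℝ), HasDerivAt (fun s => P s f x) (lap m μ (P t f) x) t)
    -- the curvature dimension condition `CD(K,∞)`
    (K : ℝ) (hCD : ∀ (f : V → ℝ) (x : V), K * gam m μ f f x ≤ gam2 m μ f x) :
    ∀ f : V → ℝ, (Function.support f).Finite → ∀ t : ℝ, 0 < t → ∀ x : V,
      deriv (fun s => gam m μ (P s f) (P s f) x) t ≤
        lap m μ (fun y => gam m μ (P t f) (P t f) y) x -
          2 * K * gam m μ (P t f) (P t f) x := by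
  intro f _ t _ x
  rw [(hasDerivAt_gam_self (hlf x) (fun y => hheat f y t)).deriv]
  have hCDx := hCD (P t f) x
  unfold gam2 at hCDx
  linarith
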